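/- Let L/K be a cyclic Galois extension of odd degree n = 2m+1 with Galois group generated by σ, and for 1 ≤ i ≤ m set A^i = {f_{b,σ^i} : b ∈ L} ⊆ Alt(L). Then for any integer k with 1 ≤ k ≤ m, every nonzero element of the nk-dimensional subspace A^1 ⊕ ⋯ ⊕ A^k of Alt(L) has rank at least n − 2k + 1. -/

import Mathlib

variable {K L : Type*} [Field K] [Field L] [Algebra K L]

/-- The alternating bilinear form `f_{b,σ}(x,y) = Tr^L_K (b * (x * σ y - σ x * y))`,
where `Tr^L_K` is the trace form of the extension `L/K`. -/
noncomputable def galoisAltForm (b : L) (σ : L ≃ₐ[K] L) : (L →ₗ[K] L →ₗ[K] K) :=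
  LinearMap.mk₂ K (fun x y => Algebra.trace K L (b * (x * σ y - σ x * y)))
    (fun x x' y => by
      try dsimp only
      rw [show b * ((x + x') * σ y - σ (x + x') * y)
            = b * (x * σ y - σ x * y) + b * (x' * σ y - σ x' * y) by
          rw [map_add σ]; ring, map_add])
    (fun a x y => by
      try dsimp only
      rw [show b * ((a • x) * σ y - σ (a • x) * y)
            = a • (b * (x * σ y - σ x * y)) by
          rw [map_smul σ]
          simp only [smul_sub, smul_mul_assoc, mul_smul_comm, mul_sub], map_smul])
    (fun x y y' => by
      try dsimp only
      rw [show b * (x * σ (y + y') - σ x * (y + y'))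
            = b * (x * σ y - σ x * y) + b * (x * σ y' - σ x * y') by
          rw [map_add σ]; ring, map_add])
    (fun a x y => by
      try dsimp only
      rw [show b * (x * σ (a • y) - σ x * (a • y))
            = a • (b * (x * σ y - σ x * y)) by
          rw [map_smul σ]
          simp only [smul_sub, smul_mul_assoc, mul_smul_comm, mul_sub], map_smul])

/-- `b ↦ f_{b,σ}` as a `K`-linear map. -/
noncomputable def galoisAltFormL (σ : L ≃ₐ[K] L) : L →ₗ[K] (L →ₗ[K] L →ₗ[K] K) where
  toFun b := galoisAltForm b σ
  map_add' b b' := by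
    ext x y
    simp only [galoisAltForm, LinearMap.mk₂_apply, LinearMap.add_apply]
    rw [← map_add, add_mul]
  map_smul' a b := by
    ext x y
    simp only [galoisAltForm, LinearMap.mk₂_apply, LinearMap.smul_apply, RingHom.id_apply]
    rw [← map_smul, smul_mul_assoc]

/-- The rank of a bilinear form on `L`: `dim_K L` minus the dimension of its radical
`{x : L | ∀ y, f x y = 0}` (which is the kernel of `f` viewed as a map `L →ₗ[K] (L →ₗ[K] K)`). -/
noncomputable def formRank (f : (L →ₗ[K] L →ₗ[K] K)) : ℕ :=
  Module.finrank K L - Module.finrank K (LinearMap.ker f)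

/-- The space `Alt(L)` of all alternating `K`-bilinear forms on `L`. -/
def altSubspace (K L : Type*) [Field K] [Field L] [Algebra K L] :
    Submodule K (L →ₗ[K] L →ₗ[K] K) where
  carrier := {f | ∀ x : L, f x x = 0}
  add_mem' hf hg x := by simp [hf x, hg x]
  zero_mem' x := rfl
  smul_mem' a f hf x := by simp [hf x]

section AuxLemmas
open Module Finset

-- fixed points lemma
theorem fixed_le_span [FiniteDimensional K L] [IsGalois K L]
    (σ : L ≃ₐ[K] L) (hgen : ∀ τ : L ≃ₐ[K] L, τ ∈ Subgroup.zpowers σ)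
    (x : L) (hx : σ x = x) : x ∈ Submodule.span K ({1} : Set L) := by
  have hall : ∀ τ : L ≃ₐ[K] L, τ x = x := by
    intro τ
    obtain ⟨z, hz⟩ := hgen τ
    have hinv : σ⁻¹ x = x := by
      conv_lhs => rw [← hx]
      exact σ.symm_apply_apply x
    have : ∀ z : ℤ, (σ ^ z) x = x := by
      intro z
      induction z using Int.induction_on with
      | zero => rfl
      | succ n ih => rw [show σ ^ ((n : ℤ) + 1) = σ ^ (n:ℤ) * σ from zpow_add_one σ n,
          AlgEquiv.mul_apply, hx, ih]
      | pred n ih => rw [show σ ^ (-(n : ℤ) - 1) = σ ^ (-(n:ℤ)) * σ⁻¹ from zpow_sub_one σ _,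
          AlgEquiv.mul_apply, hinv, ih]
    rw [← hz]; exact this z
  have hbot : x ∈ (⊥ : IntermediateField K L) := by
    rw [← IsGalois.fixedField_fixingSubgroup (⊥ : IntermediateField K L)]
    intro g
    exact hall g.1
  rw [IntermediateField.mem_bot] at hbot
  obtain ⟨c, hc⟩ := hbot
  rw [← hc, Algebra.algebraMap_eq_smul_one]
  exact Submodule.smul_mem _ _ (Submodule.mem_span_singleton_self 1)

theorem finrank_fixed_le_one [FiniteDimensional K L] [IsGalois K L]
    (σ : L ≃ₐ[K] L) (hgen : ∀ τ : L ≃ₐ[K] L, τ ∈ Subgroup.zpowers σ) :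
    finrank K (LinearMap.ker (σ.toLinearMap - LinearMap.id (R := K) (M := L))) ≤ 1 := by
  have hle : LinearMap.ker (σ.toLinearMap - LinearMap.id (R := K) (M := L))
      ≤ Submodule.span K ({1} : Set L) := by
    intro x hx
    rw [LinearMap.mem_ker, LinearMap.sub_apply, LinearMap.id_apply, sub_eq_zero] at hx
    exact fixed_le_span σ hgen x hx
  calc finrank K (LinearMap.ker (σ.toLinearMap - LinearMap.id (R := K) (M := L)))
      ≤ finrank K (Submodule.span K ({1} : Set L)) := Submodule.finrank_mono hle
    _ = 1 := finrank_span_singleton one_ne_zero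

theorem finrank_ker_comp_le {V : Type*} [AddCommGroup V] [Module K V]
    [FiniteDimensional K V] (f g : V →ₗ[K] V) :
    finrank K (LinearMap.ker (g ∘ₗ f)) ≤
      finrank K (LinearMap.ker f) + finrank K (LinearMap.ker g) := by
  have hmaps : ∀ x ∈ LinearMap.ker (g ∘ₗ f), f x ∈ LinearMap.ker g := by
    intro x hx; simpa [LinearMap.mem_ker] using hx
  set f' : LinearMap.ker (g ∘ₗ f) →ₗ[K] LinearMap.ker g := f.restrict hmaps with hf'
  have h1 : finrank K (LinearMap.range f') + finrank K (LinearMap.ker f')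
      = finrank K (LinearMap.ker (g ∘ₗ f)) := LinearMap.finrank_range_add_finrank_ker f'
  have h2 : finrank K (LinearMap.ker f') ≤ finrank K (LinearMap.ker f) := by
    let ι : LinearMap.ker f' →ₗ[K] LinearMap.ker f :=
      { toFun := fun z => ⟨(z.1 : V), by
          have hz := z.2
          rw [LinearMap.mem_ker] at hz
          have hz2 : ((f' z.1 : LinearMap.ker g) : V) = 0 := by rw [hz]; rfl
          rw [LinearMap.mem_ker]
          exact hz2⟩
        map_add' := fun a b => rfl
        map_smul' := fun a b => rfl }
    have hinj : Function.Injective ι := by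
      intro a b hab
      have : (ι a : V) = (ι b : V) := congrArg Subtype.val hab
      ext
      exact this
    exact LinearMap.finrank_le_finrank_of_injective hinj
  have h3 : finrank K (LinearMap.range f') ≤ finrank K (LinearMap.ker g) :=
    (LinearMap.range f').finrank_le
  omega

/-- the operator `∑_{j=0}^{d} c j • σ^j` -/
noncomputable def opOf (σ : L ≃ₐ[K] L) (c : ℕ → L) (d : ℕ) : L →ₗ[K] L :=
  ∑ j ∈ Finset.range (d + 1), c j • (σ ^ j).toLinearMap

theorem opOf_apply (σ : L ≃ₐ[K] L) (c : ℕ → L) (d : ℕ) (x : L) :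
    opOf σ c d x = ∑ j ∈ Finset.range (d + 1), c j * (σ ^ j) x := by
  simp [opOf, LinearMap.sum_apply, smul_eq_mul]

/-- telescoping identity -/
theorem tele (σ : L ≃ₐ[K] L) (dc : ℕ → L) (y : L) :
    ∀ d : ℕ, ∑ j ∈ Finset.range (d + 1), dc j * (σ ^ j) y
      = -(∑ i ∈ Finset.range d, (∑ j ∈ Finset.range (i+1), dc j) * ((σ ^ (i+1)) y - (σ ^ i) y))
        + (∑ j ∈ Finset.range (d+1), dc j) * (σ ^ d) y := by
  intro d
  induction d with
  | zero => simp
  | succ d ih =>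
      rw [Finset.sum_range_succ (fun j => dc j * (σ ^ j) y), ih,
        Finset.sum_range_succ (fun i => (∑ j ∈ Finset.range (i+1), dc j) * ((σ ^ (i+1)) y - (σ ^ i) y)),
        Finset.sum_range_succ dc (d+1)]
      ring

theorem skew_ker_bound [FiniteDimensional K L] [IsGalois K L]
    (σ : L ≃ₐ[K] L) (hgen : ∀ τ : L ≃ₐ[K] L, τ ∈ Subgroup.zpowers σ) :
    ∀ (d : ℕ) (c : ℕ → L), (∃ j ≤ d, c j ≠ 0) →
      finrank K (LinearMap.ker (opOf σ c d)) ≤ d := by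
  intro d
  induction d with
  | zero =>
      rintro c ⟨j, hj, hc⟩
      interval_cases j
      have : LinearMap.ker (opOf σ c 0) = ⊥ := by
        rw [LinearMap.ker_eq_bot']
        intro y hy
        rw [opOf_apply] at hy
        simpa [hc] using hy
      simp [this]
  | succ d ih =>
      intro c hc
      by_cases hker : LinearMap.ker (opOf σ c (d+1)) = ⊥
      · rw [hker]; simp
      · obtain ⟨x, hxmem, hx⟩ := Submodule.ne_bot_iff _ |>.mp hker
        rw [LinearMap.mem_ker, opOf_apply] at hxmem
        set dc : ℕ → L := fun j => c j * (σ ^ j) x with hdc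
        have hsum : ∀ i : ℕ, i ≤ d + 1 → (∑ j ∈ Finset.range (d+2), dc j) = 0 := by
          intro i _; exact hxmem
        have hPtop : (∑ j ∈ Finset.range (d+1+1), dc j) = 0 := hxmem
        set V' : L →ₗ[K] L := opOf σ (fun i => -(∑ j ∈ Finset.range (i+1), dc j)) d with hV'
        have hfact : opOf σ dc (d+1)
            = V' ∘ₗ (σ.toLinearMap - LinearMap.id (R := K) (M := L)) := by
          ext y
          rw [LinearMap.comp_apply]
          rw [opOf_apply, tele σ dc y (d+1), hPtop, zero_mul, add_zero]
          rw [hV', opOf_apply]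
          rw [neg_eq_iff_eq_neg, ← Finset.sum_neg_distrib]
          apply Finset.sum_congr rfl
          intro i _
          have h2 : (σ ^ i) ((σ.toLinearMap - LinearMap.id (R := K) (M := L)) y)
              = (σ ^ (i+1)) y - (σ ^ i) y := by
            rw [LinearMap.sub_apply, LinearMap.id_apply, map_sub, pow_succ, AlgEquiv.mul_apply]
            rfl
          rw [h2]
          ring
        -- kernel of dc-operator equals kernel of c-operator up to mult by x
        have hcomp : opOf σ dc (d+1) = (opOf σ c (d+1)) ∘ₗ LinearMap.mulLeft K x := by
          ext y
          rw [LinearMap.comp_apply, opOf_apply, opOf_apply]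
          apply Finset.sum_congr rfl
          intro j _
          rw [LinearMap.mulLeft_apply, map_mul]
          ring
        let e : L ≃ₗ[K] L :=
          LinearEquiv.ofLinear (LinearMap.mulLeft K x) (LinearMap.mulLeft K x⁻¹)
            (by ext y; simp [mul_inv_cancel_left₀ hx])
            (by ext y; simp [inv_mul_cancel_left₀ hx])
        have hekr : finrank K (LinearMap.ker (opOf σ c (d+1)))
            = finrank K (LinearMap.ker (opOf σ dc (d+1))) := by
          rw [hcomp, show LinearMap.mulLeft K x = e.toLinearMap from rfl, LinearMap.ker_comp,
            Submodule.comap_equiv_eq_map_symm]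
          exact (LinearEquiv.finrank_map_eq _ _).symm
        -- nonzero coefficient of V'
        have hVne : ∃ i ≤ d, -(∑ j ∈ Finset.range (i+1), dc j) ≠ 0 := by
          by_contra h
          push_neg at h
          have hPz : ∀ i ≤ d, (∑ j ∈ Finset.range (i+1), dc j) = 0 := by
            intro i hi
            have := h i hi
            simpa [neg_eq_zero] using this
          have hdcz : ∀ j ≤ d + 1, dc j = 0 := by
            intro j hj
            match j with
            | 0 => simpa using hPz 0 (Nat.zero_le d)
            | Nat.succ i =>
                have h1 : (∑ j ∈ Finset.range (i+1+1), dc j) = 0 := by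
                  rcases Nat.lt_or_ge i d with hlt | hge
                  · exact hPz (i+1) hlt
                  · have hieq : i = d := le_antisymm (by omega) hge
                    rw [hieq]; exact hPtop
                have h2 : (∑ j ∈ Finset.range (i+1), dc j) = 0 := hPz i (by omega)
                rw [Finset.sum_range_succ, h2, zero_add] at h1
                exact h1
          obtain ⟨j, hj, hcj⟩ := hc
          have : dc j ≠ 0 := mul_ne_zero hcj (by exact (map_ne_zero (σ ^ j)).mpr hx)
          exact this (hdcz j hj)
        calc finrank K (LinearMap.ker (opOf σ c (d+1)))
            = finrank K (LinearMap.ker (opOf σ dc (d+1))) := hekr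
          _ = finrank K (LinearMap.ker (V' ∘ₗ (σ.toLinearMap - LinearMap.id (R := K) (M := L)))) := by rw [hfact]
          _ ≤ finrank K (LinearMap.ker (σ.toLinearMap - LinearMap.id (R := K) (M := L)))
              + finrank K (LinearMap.ker V') := finrank_ker_comp_le _ _
          _ ≤ 1 + d := Nat.add_le_add (finrank_fixed_le_one σ hgen) (ih _ hVne)
          _ = d + 1 := by omega

theorem trace_algEquiv_invariant [FiniteDimensional K L] [IsGalois K L]
    (τ : L ≃ₐ[K] L) (z : L) : Algebra.trace K L (τ z) = Algebra.trace K L z := by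
  have h := trace_eq_sum_automorphisms (K := K) (τ z)
  have h2 := trace_eq_sum_automorphisms (K := K) z
  apply (algebraMap K L).injective
  rw [h, h2]
  calc ∑ ρ : L ≃ₐ[K] L, ρ (τ z) = ∑ ρ : L ≃ₐ[K] L, (ρ * τ) z := by
        apply Finset.sum_congr rfl; intro ρ _; rw [AlgEquiv.mul_apply]
    _ = ∑ ρ : L ≃ₐ[K] L, ρ z := Equiv.sum_comp (Equiv.mulRight τ) (fun ρ => ρ z)


/-- The "left multiplier" operator `D_b x = ∑ i, (σ^(i+1)).symm (b i * x) - b i * σ^(i+1) x`. -/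
noncomputable def Dop [FiniteDimensional K L] (σ : L ≃ₐ[K] L) {k : ℕ} (b : Fin k → L) :
    L →ₗ[K] L :=
  ∑ i : Fin k,
    ((σ ^ ((i : ℕ) + 1)).symm.toLinearMap ∘ₗ LinearMap.mulLeft K (b i)
      - LinearMap.mulLeft K (b i) ∘ₗ (σ ^ ((i : ℕ) + 1)).toLinearMap)

theorem Dop_apply [FiniteDimensional K L] (σ : L ≃ₐ[K] L) {k : ℕ} (b : Fin k → L) (x : L) :
    Dop σ b x = ∑ i : Fin k,
      ((σ ^ ((i : ℕ) + 1)).symm (b i) * (σ ^ ((i : ℕ) + 1)).symm x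
        - b i * (σ ^ ((i : ℕ) + 1)) x) := by
  simp [Dop, LinearMap.sum_apply, map_mul]

theorem key_trace_identity [FiniteDimensional K L] [IsGalois K L]
    (σ : L ≃ₐ[K] L) {k : ℕ} (b : Fin k → L) (x y : L) :
    (∑ i : Fin k, galoisAltForm (b i) (σ ^ ((i : ℕ) + 1))) x y
      = Algebra.trace K L (Dop σ b x * y) := by
  have hL : (∑ i : Fin k, galoisAltForm (b i) (σ ^ ((i : ℕ) + 1))) x y
      = ∑ i : Fin k, Algebra.trace K L
          (b i * (x * (σ ^ ((i : ℕ) + 1)) y - (σ ^ ((i : ℕ) + 1)) x * y)) := by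
    simp [galoisAltForm, LinearMap.sum_apply]
  rw [hL, Dop_apply, Finset.sum_mul, map_sum]
  apply Finset.sum_congr rfl
  intro i _
  set τ := σ ^ ((i : ℕ) + 1) with hτ
  have h1 : Algebra.trace K L (τ.symm (b i) * τ.symm x * y)
      = Algebra.trace K L (b i * x * τ y) := by
    have h := trace_algEquiv_invariant τ (τ.symm (b i) * τ.symm x * y)
    have h2 : τ (τ.symm (b i) * τ.symm x * y) = b i * x * τ y := by
      rw [map_mul τ, map_mul τ, τ.apply_symm_apply, τ.apply_symm_apply]
    rw [h2] at h
    exact h.symm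
  rw [mul_sub, sub_mul, map_sub, map_sub]
  congr 1
  · rw [← mul_assoc, ← h1]
  · rw [← mul_assoc]

theorem zpow_eq_one_bound (n : ℕ) [FiniteDimensional K L] [IsGalois K L]
    (hn : Module.finrank K L = n)
    (σ : L ≃ₐ[K] L) (hgen : ∀ τ : L ≃ₐ[K] L, τ ∈ Subgroup.zpowers σ)
    (z : ℤ) (hz : σ ^ z = 1) (hb : z.natAbs < n) : z = 0 := by
  have hord : orderOf σ = n := by
    rw [orderOf_eq_card_of_forall_mem_zpowers hgen,
      IsGalois.card_aut_eq_finrank, hn]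
  have hdvd : ((n : ℕ) : ℤ) ∣ z := by
    rw [← hord]; exact orderOf_dvd_iff_zpow_eq_one.mpr hz
  by_contra hz0
  have hge := Int.le_of_dvd (abs_pos.mpr hz0) ((dvd_abs _ _).mpr hdvd)
  rw [Int.abs_eq_natAbs] at hge
  omega

/-- symm of a power is the corresponding negative zpow -/
theorem symm_pow_eq_zpow (σ : L ≃ₐ[K] L) (a : ℕ) :
    (σ ^ a).symm = σ ^ (-(a : ℤ)) := by
  rw [zpow_neg, zpow_natCast]
  rfl

theorem Dop_injective (n m k : ℕ) [FiniteDimensional K L] [IsGalois K L]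
    (hn : Module.finrank K L = n) (hnm : n = 2 * m + 1) (hkm : k ≤ m)
    (σ : L ≃ₐ[K] L) (hgen : ∀ τ : L ≃ₐ[K] L, τ ∈ Subgroup.zpowers σ)
    (b : Fin k → L) (hD : ∀ x : L, Dop σ b x = 0) : b = 0 := by
  set ε : Fin k ⊕ Fin k → ℤ := fun ι => Sum.elim (fun i : Fin k => -((i : ℕ) + 1 : ℤ))
    (fun i : Fin k => ((i : ℕ) + 1 : ℤ)) ι with hε
  set χ : Fin k ⊕ Fin k → (L →* L) := fun ι => ((σ ^ (ε ι) : L ≃ₐ[K] L) : L ≃+* L).toMonoidHom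
    with hχ
  set g : Fin k ⊕ Fin k → L := fun ι =>
    Sum.elim (fun i : Fin k => (σ ^ ((i : ℕ) + 1)).symm (b i)) (fun i : Fin k => -(b i)) ι with hg
  have hχinj : Function.Injective χ := by
    intro a c hac
    have heq : (σ ^ ε a : L ≃ₐ[K] L) = σ ^ ε c := by
      apply AlgEquiv.ext
      intro x
      exact DFunLike.congr_fun hac x
    have h1 : σ ^ (ε a - ε c) = 1 := by
      rw [zpow_sub, heq, mul_inv_cancel]
    have hbound : (ε a - ε c).natAbs < n := by
      rcases a with a | a <;> rcases c with c | c <;>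
        simp only [hε, Sum.elim_inl, Sum.elim_inr] <;>
        · have := a.2; have := c.2; omega
    have h0 : ε a - ε c = 0 := zpow_eq_one_bound n hn σ hgen _ h1 hbound
    rcases a with a | a <;> rcases c with c | c <;>
      simp only [hε, Sum.elim_inl, Sum.elim_inr] at h0 <;>
      first
      | (exfalso; have := a.2; have := c.2; omega)
      | (congr 1; have : (a : ℕ) = (c : ℕ) := by omega
         exact Fin.ext this)
  have hli : LinearIndependent L (fun ι => ⇑(χ ι)) :=
    (linearIndependent_monoidHom L L).comp χ hχinj
  have hzero : (∑ ι, g ι • ⇑(χ ι)) = 0 := by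
    funext x
    have h := hD x
    rw [Dop_apply] at h
    have : (∑ ι, g ι • ⇑(χ ι)) x = ∑ ι, g ι * (χ ι) x := by
      simp [Finset.sum_apply, Pi.smul_apply, smul_eq_mul]
    rw [Pi.zero_apply, this, Fintype.sum_sum_type]
    calc (∑ i : Fin k, g (Sum.inl i) * (χ (Sum.inl i)) x)
          + ∑ i : Fin k, g (Sum.inr i) * (χ (Sum.inr i)) x
        = ∑ i : Fin k, ((σ ^ ((i : ℕ) + 1)).symm (b i) * (σ ^ ((i : ℕ) + 1)).symm x
            - b i * (σ ^ ((i : ℕ) + 1)) x) := by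
          rw [← Finset.sum_add_distrib]
          apply Finset.sum_congr rfl
          intro i _
          have hx1 : (χ (Sum.inl i)) x = (σ ^ ((i : ℕ) + 1)).symm x := by
            simp only [hχ, hε, Sum.elim_inl]
            rw [symm_pow_eq_zpow]
            rfl
          have hx2 : (χ (Sum.inr i)) x = (σ ^ ((i : ℕ) + 1)) x := by
            simp only [hχ, hε, Sum.elim_inr]
            have hc : ((i : ℕ) + 1 : ℤ) = (((i : ℕ) + 1 : ℕ) : ℤ) := by push_cast; ring
            rw [hc, zpow_natCast]
            rfl
          rw [hx1, hx2]
          simp only [hg, Sum.elim_inl, Sum.elim_inr]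
          ring
      _ = 0 := h
  have hgz := Fintype.linearIndependent_iff.mp hli g hzero
  funext i
  have := hgz (Sum.inr i)
  simp only [hg, Sum.elim_inr, neg_eq_zero] at this
  rw [this]; rfl

noncomputable def coefOf (σ : L ≃ₐ[K] L) {k : ℕ} (b : Fin k → L) : ℕ → L := fun j =>
  if h : j < k then (σ ^ j) (b ⟨k - 1 - j, by omega⟩)
  else if h2 : k < j ∧ j ≤ 2 * k then -((σ ^ k) (b ⟨j - k - 1, by omega⟩))
  else 0

theorem pow_symm_apply (σ : L ≃ₐ[K] L) {a b : ℕ} (hba : b ≤ a) (w : L) :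
    (σ ^ a) ((σ ^ b).symm w) = (σ ^ (a - b)) w := by
  conv_lhs => rw [show a = (a - b) + b by omega, pow_add, AlgEquiv.mul_apply,
    AlgEquiv.apply_symm_apply]

theorem opOf_coefOf [FiniteDimensional K L] (σ : L ≃ₐ[K] L) {k : ℕ} (b : Fin k → L) (x : L) :
    opOf σ (coefOf σ b) (2 * k) x = (σ ^ k) (Dop σ b x) := by
  rw [opOf_apply, Dop_apply, map_sum]
  have hRHS : ∀ i : Fin k,
      (σ ^ k) ((σ ^ ((i : ℕ) + 1)).symm (b i) * (σ ^ ((i : ℕ) + 1)).symm x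
        - b i * (σ ^ ((i : ℕ) + 1)) x)
      = (σ ^ (k - 1 - (i : ℕ))) (b i) * (σ ^ (k - 1 - (i : ℕ))) x
        - (σ ^ k) (b i) * (σ ^ (k + (i : ℕ) + 1)) x := by
    intro i
    have hik : (i : ℕ) + 1 ≤ k := i.2
    rw [map_sub, map_mul, map_mul, pow_symm_apply σ hik, pow_symm_apply σ hik]
    have h2 : (σ ^ k) ((σ ^ ((i : ℕ) + 1)) x) = (σ ^ (k + (i : ℕ) + 1)) x := by
      conv_rhs => rw [show k + (i : ℕ) + 1 = k + ((i : ℕ) + 1) by omega, pow_add,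
        AlgEquiv.mul_apply]
    rw [h2, show k - ((i : ℕ) + 1) = k - 1 - (i : ℕ) by omega]
  rw [Finset.sum_congr rfl (fun i _ => hRHS i), Finset.sum_sub_distrib]
  -- now handle LHS
  rw [show 2 * k + 1 = k + (k + 1) by omega, Finset.sum_range_add]
  have hmid : ∑ i ∈ Finset.range (k + 1), coefOf σ b (k + i) * (σ ^ (k + i)) x
      = ∑ i ∈ Finset.range k, coefOf σ b (k + (i + 1)) * (σ ^ (k + (i + 1))) x
        + coefOf σ b (k + 0) * (σ ^ (k + 0)) x :=
    Finset.sum_range_succ' (fun i => coefOf σ b (k + i) * (σ ^ (k + i)) x) k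
  rw [hmid]
  have hck : coefOf σ b (k + 0) = 0 := by
    rw [coefOf]
    rw [dif_neg (by omega), dif_neg (by omega)]
  rw [hck, zero_mul, add_zero]
  have hpart1 : ∑ j ∈ Finset.range k, coefOf σ b j * (σ ^ j) x
      = ∑ i : Fin k, (σ ^ (k - 1 - (i : ℕ))) (b i) * (σ ^ (k - 1 - (i : ℕ))) x := by
    set G : ℕ → L := fun i =>
      if h : i < k then (σ ^ (k - 1 - i)) (b ⟨i, h⟩) * (σ ^ (k - 1 - i)) x else 0 with hG
    have hfin : ∑ i : Fin k, (σ ^ (k - 1 - (i : ℕ))) (b i) * (σ ^ (k - 1 - (i : ℕ))) x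
        = ∑ i ∈ Finset.range k, G i := by
      rw [← Fin.sum_univ_eq_sum_range G k]
      apply Finset.sum_congr rfl
      intro i _
      simp only [hG]
      rw [dif_pos i.2]
    rw [hfin, ← Finset.sum_range_reflect G k]
    apply Finset.sum_congr rfl
    intro j hj
    rw [Finset.mem_range] at hj
    simp only [hG]
    rw [dif_pos (show k - 1 - j < k by omega)]
    rw [coefOf, dif_pos hj]
    have h1 : k - 1 - (k - 1 - j) = j := by omega
    rw [h1]
  have hpart2 : ∑ i ∈ Finset.range k, coefOf σ b (k + (i + 1)) * (σ ^ (k + (i + 1))) x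
      = -∑ i : Fin k, (σ ^ k) (b i) * (σ ^ (k + (i : ℕ) + 1)) x := by
    rw [← Finset.sum_neg_distrib]
    set G : ℕ → L := fun i =>
      if h : i < k then -((σ ^ k) (b ⟨i, h⟩) * (σ ^ (k + i + 1)) x) else 0 with hG
    have hfin : ∑ i : Fin k, -((σ ^ k) (b i) * (σ ^ (k + (i : ℕ) + 1)) x)
        = ∑ i ∈ Finset.range k, G i := by
      rw [← Fin.sum_univ_eq_sum_range G k]
      apply Finset.sum_congr rfl
      intro i _
      simp only [hG]
      rw [dif_pos i.2]
    rw [hfin]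
    apply Finset.sum_congr rfl
    intro i hi
    rw [Finset.mem_range] at hi
    simp only [hG]
    rw [dif_pos hi, coefOf, dif_neg (by omega), dif_pos (by omega)]
    have h1 : k + (i + 1) - k - 1 = i := by omega
    have h2 : k + (i + 1) = k + i + 1 := by omega
    simp only [h1]
    simp only [h2]
    rw [neg_mul]
  rw [hpart1, hpart2]
  ring

theorem alt_rank_even (r : ℕ) :
    ∀ {V : Type*} [AddCommGroup V] [Module K V] [FiniteDimensional K V]
      (f : V →ₗ[K] V →ₗ[K] K), (∀ x, f x x = 0) →
      finrank K (LinearMap.range f) = r → Even r := by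
  induction r using Nat.strong_induction_on with
  | _ r ih =>
    intro V _ _ _ f halt hr
    have hskew : ∀ x y : V, f y x = -(f x y) := by
      intro x y
      have h := halt (x + y)
      simp only [map_add, LinearMap.add_apply] at h
      rw [halt x, halt y] at h
      linear_combination h
    rcases Nat.eq_zero_or_pos r with hr0 | hrpos
    · exact hr0 ▸ Even.zero
    -- f ≠ 0
    have hfne : ∃ x y : V, f x y ≠ 0 := by
      by_contra h
      push_neg at h
      have : f = 0 := by ext x y; exact h x y
      rw [this, LinearMap.range_zero, finrank_bot] at hr
      omega
    obtain ⟨x, y', hxy'⟩ := hfne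
    set y : V := (f x y')⁻¹ • y' with hy
    have hxy : f x y = 1 := by
      rw [hy, map_smul, smul_eq_mul, inv_mul_cancel₀ hxy']
    have hyx : f y x = -1 := by rw [hskew, hxy]
    -- the surjection g
    set g : V →ₗ[K] K × K := (f x).prod (f y) with hg
    have hgsurj : Function.Surjective g := by
      intro ⟨a, b⟩
      refine ⟨a • y - b • x, ?_⟩
      have h1 : f x (a • y - b • x) = a := by
        simp only [map_sub, map_smul, smul_eq_mul]
        rw [hxy, halt x]; ring
      have h2 : f y (a • y - b • x) = b := by
        simp only [map_sub, map_smul, smul_eq_mul]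
        rw [hyx, halt y]; ring
      simp only [hg, LinearMap.prod_apply, Function.prod]
      rw [h1, h2]
    set W : Submodule K V := LinearMap.ker g with hW
    have hmemW : ∀ v : V, v ∈ W ↔ f x v = 0 ∧ f y v = 0 := by
      intro v
      rw [hW, LinearMap.mem_ker, hg, LinearMap.prod_apply]
      constructor
      · intro h; exact ⟨congrArg Prod.fst h, congrArg Prod.snd h⟩
      · intro ⟨h1, h2⟩; exact Prod.ext h1 h2
    have hdimW : finrank K W + 2 = finrank K V := by
      have h1 := LinearMap.finrank_range_add_finrank_ker g
      have hrange : finrank K (LinearMap.range g) = 2 := by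
        rw [LinearMap.range_eq_top.mpr hgsurj, finrank_top, Module.finrank_prod, finrank_self]
      rw [← hW] at h1
      omega
    -- the restricted form
    set f' : W →ₗ[K] W →ₗ[K] K := f.domRestrict₁₂ W W with hf'
    have hf'app : ∀ z w : W, f' z w = f (z : V) (w : V) := fun z w => rfl
    have halt' : ∀ z : W, f' z z = 0 := fun z => halt (z : V)
    -- decomposition of a vector
    have hdecomp : ∀ v : V, v + (f y v) • x - (f x v) • y ∈ W := by
      intro v
      rw [hmemW]
      constructor
      · simp only [map_add, map_sub, map_smul, smul_eq_mul]
        rw [halt x, hxy]; ring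
      · simp only [map_add, map_sub, map_smul, smul_eq_mul]
        rw [hyx, halt y]; ring
    -- kernels agree
    have hkerle : LinearMap.ker f ≤ W := by
      intro z hz
      rw [LinearMap.mem_ker] at hz
      rw [hmemW]
      constructor
      · rw [hskew]; rw [hz]; simp
      · rw [hskew]; rw [hz]; simp
    have hkereq : LinearMap.ker f' = Submodule.comap W.subtype (LinearMap.ker f) := by
      ext z
      rw [LinearMap.mem_ker, Submodule.mem_comap, LinearMap.mem_ker, Submodule.coe_subtype]
      constructor
      · intro hz
        ext v
        have hzx : f (z : V) x = 0 := by
          rw [hskew]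
          rw [((hmemW z).mp z.2).1]
          simp
        have hzy : f (z : V) y = 0 := by
          rw [hskew]
          rw [((hmemW z).mp z.2).2]
          simp
        have hzw : f (z : V) (v + (f y v) • x - (f x v) • y) = 0 := by
          have := congrFun (congrArg DFunLike.coe hz) ⟨_, hdecomp v⟩
          rw [hf'app] at this
          exact this
        simp only [map_add, map_sub, map_smul, smul_eq_mul] at hzw
        rw [hzx, hzy] at hzw
        simp only [LinearMap.zero_apply]
        linear_combination hzw
      · intro hz
        ext w
        rw [hf'app, hz]
        simp
    have hkerdim : finrank K (LinearMap.ker f') = finrank K (LinearMap.ker f) := by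
      rw [hkereq]
      exact LinearEquiv.finrank_eq (Submodule.comapSubtypeEquivOfLe hkerle)
    -- rank bookkeeping
    have h1 := LinearMap.finrank_range_add_finrank_ker f
    have h2 := LinearMap.finrank_range_add_finrank_ker f'
    have h3 : finrank K (LinearMap.ker f) ≤ finrank K W := Submodule.finrank_mono hkerle
    set r' := finrank K (LinearMap.range f') with hr'
    have hrr' : r = r' + 2 := by omega
    have : Even r' := ih r' (by omega) f' halt' rfl
    rw [hrr']
    exact this.add even_two

end AuxLemmas

theorem statement15 [FiniteDimensional K L] [IsGalois K L]
    (n m : ℕ) (hn : Module.finrank K L = n) (hnm : n = 2 * m + 1)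
    (σ : L ≃ₐ[K] L) (hgen : ∀ τ : L ≃ₐ[K] L, τ ∈ Subgroup.zpowers σ)
    (k : ℕ) (hk1 : 1 ≤ k) (hkm : k ≤ m) :
    Module.finrank K
        ↥(⨆ i : Fin k, LinearMap.range (galoisAltFormL (σ ^ ((i : ℕ) + 1)))) = n * k ∧
    ∀ f ∈ (⨆ i : Fin k, LinearMap.range (galoisAltFormL (σ ^ ((i : ℕ) + 1)))),
      f ≠ 0 → n - 2 * k + 1 ≤ formRank f := by
  classical
  open Module Finset in
  set Ψ : (Fin k → L) →ₗ[K] (L →ₗ[K] L →ₗ[K] K) :=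
    ∑ i : Fin k, (galoisAltFormL (σ ^ ((i : ℕ) + 1))) ∘ₗ (LinearMap.proj i) with hΨ
  have hΨapp : ∀ b : Fin k → L,
      Ψ b = ∑ i : Fin k, galoisAltForm (b i) (σ ^ ((i : ℕ) + 1)) := by
    intro b
    rw [hΨ, LinearMap.sum_apply]
    apply Finset.sum_congr rfl
    intro i _
    rfl
  have hrange : (⨆ i : Fin k, LinearMap.range (galoisAltFormL (σ ^ ((i : ℕ) + 1))))
      = LinearMap.range Ψ := by
    apply le_antisymm
    · apply iSup_le
      rintro i f ⟨c, rfl⟩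
      refine ⟨Pi.single i c, ?_⟩
      rw [hΨapp]
      rw [Finset.sum_eq_single i ?_ ?_]
      · rw [Pi.single_eq_same]; rfl
      · intro j _ hji
        rw [Pi.single_eq_of_ne hji]
        exact map_zero (galoisAltFormL (σ ^ ((j : ℕ) + 1)))
      · intro h; exact absurd (Finset.mem_univ i) h
    · rintro f ⟨b, rfl⟩
      rw [hΨapp]
      apply Submodule.sum_mem
      intro i _
      exact Submodule.mem_iSup_of_mem i ⟨b i, rfl⟩
  have hkey : ∀ (b : Fin k → L) (x y : L),
      Ψ b x y = Algebra.trace K L (Dop σ b x * y) := by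
    intro b x y
    rw [hΨapp]
    exact key_trace_identity σ b x y
  have hinj : Function.Injective Ψ := by
    rw [injective_iff_map_eq_zero]
    intro b hb
    apply Dop_injective n m k hn hnm hkm σ hgen
    intro x
    apply (traceForm_nondegenerate K L).1 _
    intro y
    rw [Algebra.traceForm_apply, ← hkey b x y, hb]
    rfl
  constructor
  · rw [hrange, LinearMap.finrank_range_of_inj hinj, Module.finrank_pi_fintype]
    simp [hn, Finset.sum_const, mul_comm]
  · intro f hf hfne
    rw [hrange] at hf
    obtain ⟨b, rfl⟩ := hf
    have hbne : b ≠ 0 := fun h => hfne (by rw [h, map_zero])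
    obtain ⟨i0, hbi0⟩ := Function.ne_iff.mp hbne
    rw [Pi.zero_apply] at hbi0
    have hkerD : LinearMap.ker (Ψ b) = LinearMap.ker (Dop σ b) := by
      ext x
      rw [LinearMap.mem_ker, LinearMap.mem_ker]
      constructor
      · intro h
        apply (traceForm_nondegenerate K L).1
        intro y
        rw [Algebra.traceForm_apply, ← hkey b x y, h]
        rfl
      · intro h
        ext y
        rw [hkey b x y, h, zero_mul, map_zero]
        rfl
    have hcomp : opOf σ (coefOf σ b) (2 * k) = (σ ^ k).toLinearMap ∘ₗ Dop σ b :=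
      LinearMap.ext (fun x => opOf_coefOf σ b x)
    have hkop : LinearMap.ker (opOf σ (coefOf σ b) (2 * k)) = LinearMap.ker (Dop σ b) := by
      rw [hcomp]
      apply LinearMap.ker_comp_of_ker_eq_bot
      rw [LinearMap.ker_eq_bot]
      exact (σ ^ k).injective
    have hi0k : (i0 : ℕ) < k := i0.2
    have hcne : ∃ j ≤ 2 * k, coefOf σ b j ≠ 0 := by
      refine ⟨k - 1 - (i0 : ℕ), by omega, ?_⟩
      rw [coefOf, dif_pos (show k - 1 - (i0 : ℕ) < k by omega)]
      simp only [show k - 1 - (k - 1 - (i0 : ℕ)) = (i0 : ℕ) from by omega, Fin.eta]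
      intro h
      exact hbi0 ((σ ^ (k - 1 - (i0 : ℕ))).injective (by rw [h, map_zero]))
    have hkerbound : finrank K (LinearMap.ker (Ψ b)) ≤ 2 * k := by
      rw [hkerD, ← hkop]
      exact skew_ker_bound σ hgen (2 * k) _ hcne
    have halt : ∀ x : L, Ψ b x x = 0 := by
      intro x
      rw [hΨapp]
      have hterm : ∀ i : Fin k, galoisAltForm (b i) (σ ^ ((i : ℕ) + 1)) x x = 0 := by
        intro i
        show Algebra.trace K L
          (b i * (x * (σ ^ ((i : ℕ) + 1)) x - (σ ^ ((i : ℕ) + 1)) x * x)) = 0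
        rw [mul_comm x ((σ ^ ((i : ℕ) + 1)) x), sub_self, mul_zero, map_zero]
      rw [LinearMap.sum_apply]
      simp only [LinearMap.coe_sum, Finset.sum_apply]
      rw [Finset.sum_congr rfl (fun i _ => hterm i), Finset.sum_const_zero]
    have hrn := LinearMap.finrank_range_add_finrank_ker (Ψ b)
    have heven : Even (finrank K (LinearMap.range (Ψ b))) :=
      alt_rank_even _ (Ψ b) halt rfl
    have hfr : formRank (Ψ b) = finrank K L - finrank K (LinearMap.ker (Ψ b)) := rfl
    obtain ⟨t, ht⟩ := heven
    rw [hfr, hn]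
    rw [hn] at hrn
    omega
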